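/- arXiv:1811.10918 — 4 statements merged into one kernel-verified Lean document; each statement's English description precedes it below -/
import Mathlib

section
/- Let v = 1u0 be a type α Dyck word and let w be any Dyck word of the same length as v. Then v and w are non-overlapping strings: no nonempty proper prefix of one equals a nonempty proper suffix of the other. -/
/-- number of 1's in a binary word (1 = `true`) -/
def ones (w : List Bool) : ℕ := w.count true

/-- number of 0's in a binary word (0 = `false`) -/
def zeros (w : List Bool) : ℕ := w.count false

/-- Dyck word: equally many 1's and 0's, every prefix has at least as many 1's as 0's. -/
def IsDyck (w : List Bool) : Prop :=
  ones w = zeros w ∧ ∀ γ : List Bool, γ <+: w → zeros γ ≤ ones γ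

/-- type α Dyck word: a Dyck word all of whose nonempty proper prefixes have
strictly more 1's than 0's. -/
def IsAlphaDyck (v : List Bool) : Prop :=
  IsDyck v ∧ ∀ γ : List Bool, γ <+: v → γ ≠ [] → γ ≠ v → zeros γ < ones γ

/-- two strings are non-overlapping: no nonempty proper prefix of either equals a
nonempty proper suffix of the other. -/
def NonOverlapping (x y : List Bool) : Prop :=
  ∀ s : List Bool, s ≠ [] →
    ¬(s <+: x ∧ s ≠ x ∧ s <:+ y ∧ s ≠ y) ∧
    ¬(s <+: y ∧ s ≠ y ∧ s <:+ x ∧ s ≠ x)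

/-!
A nonempty proper prefix of the type α word `v` has more 1's than 0's, whereas any suffix of the
Dyck word `w` has at least as many 0's as 1's, because its complementary prefix has at least
as many 1's. Symmetrically, a nonempty proper suffix of `v` has more 0's than 1's, whereas every
prefix of `w` has at least as many 1's.
-/

theorem IsDyck.ones_le_zeros_of_suffix {w s : List Bool} (hw : IsDyck w) (hs : s <:+ w) :
    ones s ≤ zeros s := by
  obtain ⟨γ, rfl⟩ := hs
  have hγ := hw.2 γ (List.prefix_append γ s)
  have hbal := hw.1
  simp only [ones, zeros, List.count_append] at hγ hbal ⊢
  omega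

theorem IsAlphaDyck.ones_lt_zeros_of_suffix {v s : List Bool} (hv : IsAlphaDyck v)
    (hs : s <:+ v) (hne : s ≠ []) (hnev : s ≠ v) : ones s < zeros s := by
  obtain ⟨γ, rfl⟩ := hs
  have hγ : zeros γ < ones γ :=
    hv.2 γ (List.prefix_append γ s) (by rintro rfl; exact hnev rfl) (by simpa using hne.symm)
  have hbal := hv.1.1
  simp only [ones, zeros, List.count_append] at hγ hbal ⊢
  omega

theorem alpha_dyck_nonoverlapping_general (v w : List Bool) (hv : IsAlphaDyck v) (hw : IsDyck w) :
    NonOverlapping v w := by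
  intro s hs
  refine ⟨fun ⟨hpv, hnev, hsw, _⟩ => ?_, fun ⟨hpw, _, hsv, hnev⟩ => ?_⟩
  · exact (hv.2 s hpv hs hnev).not_ge (hw.ones_le_zeros_of_suffix hsw)
  · exact (hw.2 s hpw).not_gt (hv.ones_lt_zeros_of_suffix hsv hs hnev)

/-- a type α Dyck word and any Dyck word of the same length are non-overlapping. -/
theorem alpha_dyck_nonoverlapping (v w : List Bool) (hv : IsAlphaDyck v) (hw : IsDyck w)
    (hlen : w.length = v.length) : NonOverlapping v w :=
  alpha_dyck_nonoverlapping_general v w hv hw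
end

section
/- Let v = 1u0 be a type α Dyck word of length n (so u is a Dyck word of length n−2), and let B = w00 where w is a Dyck word of length n−2 with w ≠ u. Then v and B are non-overlapping strings. -/
/-!
Every nonempty proper prefix of `v = 1u0` has more 1's than 0's, while every nonempty suffix of
`B = w00` has more 0's than 1's, because each suffix of the Dyck word `w` has at least as many 0's
as 1's. Conversely, a proper suffix of `v` is `t0` with `t` a suffix of `u`, so it has more 0's
than 1's; as a prefix of `B` it therefore cannot lie inside the Dyck word `w`, so it is `w0`, and
then `w = t` is a suffix of `u` of the same length, i.e. `w = u`.
-/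

lemma ones_lt_zeros_append_false {t : List Bool} (h : ones t ≤ zeros t) :
    ones (t ++ [false]) < zeros (t ++ [false]) := by
  simpa [ones, zeros] using Nat.lt_succ_of_le h

lemma ones_lt_zeros_of_suffix_append_false {l s : List Bool}
    (hl : ∀ t, t <:+ l → ones t ≤ zeros t) (hs : s <:+ l ++ [false]) (hne : s ≠ []) :
    ones s < zeros s := by
  obtain ⟨t, rfl, ht⟩ := (List.suffix_concat_iff.mp hs).resolve_left hne
  exact ones_lt_zeros_append_false (hl t ht)

namespace IsDyck

variable {w s : List Bool}

lemma ones_le_zeros_of_suffix_s6 (hw : IsDyck w) (hs : s <:+ w) : ones s ≤ zeros s := by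
  obtain ⟨p, rfl⟩ := hs
  have hp := hw.2 p (List.prefix_append _ _)
  have h := hw.1
  simp only [ones, zeros, List.count_append] at h hp ⊢
  omega

lemma ones_lt_zeros_of_suffix_append_false_false (hw : IsDyck w)
    (hs : s <:+ w ++ [false, false]) (hne : s ≠ []) : ones s < zeros s := by
  have hw0 : ∀ t, t <:+ w ++ [false] → ones t ≤ zeros t := by
    intro t ht
    rcases eq_or_ne t [] with rfl | htne
    · exact le_rfl
    · exact (ones_lt_zeros_of_suffix_append_false (fun _ => hw.ones_le_zeros_of_suffix_s6) ht htne).le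
  exact ones_lt_zeros_of_suffix_append_false hw0 (by simpa using hs) hne

lemma eq_append_false_of_prefix_append_false_false (hw : IsDyck w)
    (hs : s <+: w ++ [false, false]) (hsne : s ≠ w ++ [false, false])
    (hlt : ones s < zeros s) : s = w ++ [false] := by
  have hs' : s <+: (w ++ [false]) ++ [false] := by simpa using hs
  rcases List.prefix_concat_iff.mp hs' with h | h
  · exact absurd (by simpa using h) hsne
  rcases List.prefix_concat_iff.mp h with h | h
  · exact h
  · exact absurd (hw.2 s h) (not_le.mpr hlt)

end IsDyck

theorem alpha_type3_nonoverlapping_general (n : ℕ) (u v w B : List Bool)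
    (hv : v = true :: (u ++ [false])) (hα : IsAlphaDyck v)
    (hu : IsDyck u) (hul : u.length = n - 2)
    (hw : IsDyck w) (hwl : w.length = n - 2) (hwu : w ≠ u)
    (hB : B = w ++ [false, false]) : NonOverlapping v B := by
  subst hB
  intro s hs
  refine ⟨fun ⟨hsv, hsnv, hsB, _⟩ => ?_, fun ⟨hsB, hsnB, hsv, hsnv⟩ => ?_⟩
  · exact lt_asymm (hα.2 s hsv hs hsnv) (hw.ones_lt_zeros_of_suffix_append_false_false hsB hs)
  · subst hv
    have hsv' : s <:+ (true :: u) ++ [false] := by simpa using hsv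
    obtain ⟨t, rfl, ht⟩ := (List.suffix_concat_iff.mp hsv').resolve_left hs
    have htu : t <:+ u := (List.suffix_cons_iff.mp ht).resolve_left (by rintro rfl; simp at hsnv)
    have htw : t = w := by
      simpa using hw.eq_append_false_of_prefix_append_false_false hsB hsnB
        (ones_lt_zeros_append_false (hu.ones_le_zeros_of_suffix_s6 htu))
    subst htw
    exact hwu (htu.eq_of_length (hwl.trans hul.symm))

/-- v = 1u0 type α of length n and B = w00 with w Dyck of length n−2, w ≠ u,
are non-overlapping. -/
theorem alpha_type3_nonoverlapping (n : ℕ) (u v w B : List Bool)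
    (hv : v = true :: (u ++ [false])) (hα : IsAlphaDyck v) (hvlen : v.length = n)
    (hu : IsDyck u) (hul : u.length = n - 2)
    (hw : IsDyck w) (hwl : w.length = n - 2) (hwu : w ≠ u)
    (hB : B = w ++ [false, false]) : NonOverlapping v B :=
  alpha_type3_nonoverlapping_general n u v w B hv hα hu hul hw hwl hwu hB
end

section
/- If γ is a nonempty proper prefix of a type α Dyck word v, then the string γ is not a Dyck word, and moreover γ cannot equal the suffix of length |γ| of any string of the form w00 with w a Dyck word. -/
/-! A nonempty proper prefix `γ` of a type α Dyck word has strictly more 1's than 0's, so it is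
not balanced. On the other hand, in a Dyck word every suffix has at least as many 0's as 1's,
and appending 0's keeps this true for every suffix of `w ++ 00`; so `γ` cannot be one of them. -/

theorem List.suffix_append_cases {α : Type*} {s w u : List α} (h : s <:+ w ++ u) :
    s <:+ u ∨ ∃ t, t <:+ w ∧ s = t ++ u := by
  obtain ⟨p, hp⟩ := h
  rcases List.append_eq_append_iff.1 hp with ⟨t, rfl, rfl⟩ | ⟨bs, rfl, rfl⟩
  · exact Or.inr ⟨t, List.suffix_append _ _, rfl⟩
  · exact Or.inl (List.suffix_append _ _)

theorem IsDyck.ones_le_zeros_of_suffix_append {w u s : List Bool} (hw : IsDyck w)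
    (hu : true ∉ u) (hs : s <:+ w ++ u) : ones s ≤ zeros s := by
  rcases List.suffix_append_cases hs with hsu | ⟨t, ht, rfl⟩
  · have hs0 : ones s = 0 := List.count_eq_zero.2 fun h => hu (hsu.subset h)
    exact hs0 ▸ Nat.zero_le _
  · have hu0 : ones u = 0 := List.count_eq_zero.2 hu
    have ht' := hw.ones_le_zeros_of_suffix ht
    simp only [ones, zeros, List.count_append] at hu0 ht' ⊢
    omega

/-- a nonempty proper prefix γ of a type α Dyck word is not a Dyck word, and is
not a suffix of any w00 with w Dyck (in particular it is not the suffix of length |γ| of w00). -/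
theorem alpha_prefix_not_dyck_nor_type3_suffix (v γ : List Bool)
    (hv : IsAlphaDyck v) (hγ : γ <+: v) (hγne : γ ≠ []) (hγpr : γ ≠ v) :
    ¬ IsDyck γ ∧ ∀ w : List Bool, IsDyck w → ¬ γ <:+ (w ++ [false, false]) := by
  have hlt : zeros γ < ones γ := hv.2 γ hγ hγne hγpr
  exact ⟨fun hd => hlt.ne' hd.1,
    fun w hw hsuf => (hw.ones_le_zeros_of_suffix_append (by decide) hsuf).not_gt hlt⟩
end

section
/- The number of type α Dyck words of length 2ℓ (ℓ ≥ 1) equals the Catalan number C_{ℓ−1}. -/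
/-! Reading `1` as an up step `U` and `0` as a down step `D` identifies Dyck words with Mathlib's
`DyckWord`s, and type α Dyck words of positive length with the nested ones, `(x)` for a Dyck
word `x`. Removing the outer brackets is a bijection onto the Dyck words of semilength `ℓ - 1`,
which are counted by `catalan (ℓ - 1)`. -/

open DyckStep

def boolEquivDyckStep : Bool ≃ DyckStep where
  toFun b := if b then U else D
  invFun s := s = U
  left_inv b := by cases b <;> rfl
  right_inv s := by cases s <;> rfl

lemma count_U_map_boolEquivDyckStep (w : List Bool) :
    (w.map boolEquivDyckStep).count U = ones w :=
  List.count_map_of_injective w _ boolEquivDyckStep.injective true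

lemma count_D_map_boolEquivDyckStep (w : List Bool) :
    (w.map boolEquivDyckStep).count D = zeros w :=
  List.count_map_of_injective w _ boolEquivDyckStep.injective false

lemma isDyck_iff_take (w : List Bool) :
    IsDyck w ↔ ones w = zeros w ∧ ∀ i, zeros (w.take i) ≤ ones (w.take i) := by
  refine and_congr_right fun _ => ⟨fun h i => h _ (w.take_prefix i), fun h γ hγ => ?_⟩
  rw [List.prefix_iff_eq_take.mp hγ]
  exact h _

lemma isAlphaDyck_iff_take (w : List Bool) :
    IsAlphaDyck w ↔
      IsDyck w ∧ ∀ ⦃i⦄, 0 < i → i < w.length → zeros (w.take i) < ones (w.take i) := by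
  refine and_congr_right fun _ => ⟨fun h i hi hiw => h _ (w.take_prefix i) ?_ ?_, ?_⟩
  · rw [← List.length_pos_iff, List.length_take]
    omega
  · intro heq
    have := congrArg List.length heq
    rw [List.length_take] at this
    omega
  · intro h γ hγ hne hneq
    have hlen : γ.length < w.length :=
      hγ.length_le.lt_of_ne fun hl => hneq (hγ.eq_of_length hl)
    rw [List.prefix_iff_eq_take.mp hγ]
    exact h (List.length_pos_iff.mpr hne) hlen

lemma isDyck_iff_map_boolEquivDyckStep (w : List Bool) :
    IsDyck w ↔
      (w.map boolEquivDyckStep).count U = (w.map boolEquivDyckStep).count D ∧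
        ∀ i, ((w.map boolEquivDyckStep).take i).count D ≤
          ((w.map boolEquivDyckStep).take i).count U := by
  simp only [isDyck_iff_take, ← List.map_take, count_U_map_boolEquivDyckStep,
    count_D_map_boolEquivDyckStep]

def dyckWordEquiv : {w : List Bool // IsDyck w} ≃ DyckWord where
  toFun w := ⟨w.1.map boolEquivDyckStep, ((isDyck_iff_map_boolEquivDyckStep _).mp w.2).1,
    ((isDyck_iff_map_boolEquivDyckStep _).mp w.2).2⟩
  invFun p := ⟨p.toList.map boolEquivDyckStep.symm, by
    rw [isDyck_iff_map_boolEquivDyckStep, List.map_map, Equiv.self_comp_symm, List.map_id]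
    exact ⟨p.count_U_eq_count_D, p.count_D_le_count_U⟩⟩
  left_inv w := by ext1; simp
  right_inv p := by ext1; simp

lemma toList_dyckWordEquiv (w : {w : List Bool // IsDyck w}) :
    (dyckWordEquiv w).toList = w.1.map boolEquivDyckStep :=
  rfl

lemma two_mul_semilength_dyckWordEquiv (w : {w : List Bool // IsDyck w}) :
    2 * (dyckWordEquiv w).semilength = w.1.length := by
  rw [DyckWord.two_mul_semilength_eq_length, toList_dyckWordEquiv, List.length_map]

lemma isNested_dyckWordEquiv_iff (w : {w : List Bool // IsDyck w}) :
    (dyckWordEquiv w).IsNested ↔ w.1 ≠ [] ∧ IsAlphaDyck w.1 := by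
  simp only [DyckWord.IsNested, ← DyckWord.toList_ne_nil, toList_dyckWordEquiv, ne_eq,
    List.map_eq_nil_iff, List.length_map, ← List.map_take, count_U_map_boolEquivDyckStep,
    count_D_map_boolEquivDyckStep, isAlphaDyck_iff_take, w.2, true_and]

def alphaDyckEquivNested (n : ℕ) :
    {v : List Bool // IsAlphaDyck v ∧ v.length = 2 * (n + 1)} ≃
      {p : DyckWord // p.IsNested ∧ p.semilength = n + 1} :=
  (Equiv.subtypeSubtypeEquivSubtype fun h => h.1.1).symm.trans <|
    dyckWordEquiv.subtypeEquiv fun w => by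
      have hlen := two_mul_semilength_dyckWordEquiv w
      rw [isNested_dyckWordEquiv_iff]
      constructor
      · rintro ⟨halpha, hl⟩
        exact ⟨⟨List.ne_nil_of_length_pos (by omega), halpha⟩, by omega⟩
      · rintro ⟨⟨-, halpha⟩, hs⟩
        exact ⟨halpha, by omega⟩

def nestEquiv (n : ℕ) :
    {p : DyckWord // p.semilength = n} ≃
      {p : DyckWord // p.IsNested ∧ p.semilength = n + 1} where
  toFun p := ⟨p.1.nest, .nest, by simp [p.2]⟩
  invFun p := ⟨p.1.denest p.2.1, by
    have h := p.2.2
    rw [← p.1.nest_denest p.2.1, DyckWord.semilength_nest] at h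
    omega⟩
  left_inv p := Subtype.ext p.1.denest_nest
  right_inv p := Subtype.ext (p.1.nest_denest p.2.1)

/-- the number of type α Dyck words of length 2ℓ (ℓ ≥ 1) is the Catalan number
C_{ℓ−1}. -/
theorem card_alpha_dyck (ℓ : ℕ) (hℓ : 1 ≤ ℓ) :
    {v : List Bool | IsAlphaDyck v ∧ v.length = 2 * ℓ}.ncard = catalan (ℓ - 1) := by
  obtain ⟨n, rfl⟩ := Nat.exists_eq_add_of_le' hℓ
  rw [Nat.add_sub_cancel, ← Nat.card_coe_set_eq]
  calc Nat.card {v // IsAlphaDyck v ∧ v.length = 2 * (n + 1)}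
      = Nat.card {p : DyckWord // p.IsNested ∧ p.semilength = n + 1} :=
        Nat.card_congr (alphaDyckEquivNested n)
    _ = Nat.card {p : DyckWord // p.semilength = n} := (Nat.card_congr (nestEquiv n)).symm
    _ = catalan n := by
        rw [Nat.card_eq_fintype_card, DyckWord.card_dyckWord_semilength_eq_catalan]
end
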